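/- arXiv:2104.01412 — 4 statements merged into one kernel-verified Lean document; each statement's English description precedes it below -/
import Mathlib

section
/- Let α₁, α₂ > 0 with α₁ ≠ α₂. Then x = 1/2 is the unique solution in (0,1) of the equation F_{α₁}(x) = F_{α₂}(x), where F_α is the distribution function of the symmetric Beta distribution with parameter α. -/
open MeasureTheory intervalIntegral

noncomputable def betaB (α : ℝ) : ℝ := ∫ x in (0:ℝ)..1, x ^ (α - 1) * (1 - x) ^ (α - 1)

noncomputable def fbeta (α x : ℝ) : ℝ := x ^ (α - 1) * (1 - x) ^ (α - 1) / betaB α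

noncomputable def Fbeta (α t : ℝ) : ℝ := ∫ x in (0:ℝ)..t, fbeta α x

/-!
For `β < α` the density ratio `fbeta α t / fbeta β t` is a constant times `(t (1 - t)) ^ (α - β)`,
hence strictly increasing on `(0, 1/2)`. Both distributions give mass `1/2` to `(0, 1/2)`, by the
symmetry `x ↦ 1 - x`. An increasing density ratio orders the partial integrals strictly: before
the densities cross, `fbeta α < fbeta β`; after the crossing, `α` has more of the remaining mass.
So `Fbeta α < Fbeta β` on `(0, 1/2)`, and by symmetry `Fbeta β < Fbeta α` on `(1/2, 1)`.
-/

open Set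

theorem intervalIntegral_lt_of_forall_mem_Ioo_lt {f g : ℝ → ℝ} {a b : ℝ}
    (hf : IntervalIntegrable f volume a b) (hg : IntervalIntegrable g volume a b) (hab : a < b)
    (hlt : ∀ t ∈ Ioo a b, f t < g t) :
    ∫ t in a..b, f t < ∫ t in a..b, g t := by
  have hpos : 0 < ∫ t in a..b, (g t - f t) :=
    intervalIntegral_pos_of_pos_on (hg.sub hf) (fun t ht => sub_pos.2 (hlt t ht)) hab
  rwa [integral_sub hg hf, sub_pos] at hpos

theorem intervalIntegral_lt_of_strictMonoOn_div {f g : ℝ → ℝ} {a b x : ℝ}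
    (hf : IntervalIntegrable f volume a b) (hg : IntervalIntegrable g volume a b)
    (hg_pos : ∀ t ∈ Ioo a b, 0 < g t) (hmono : StrictMonoOn (fun t => f t / g t) (Ioo a b))
    (heq : ∫ t in a..b, f t = ∫ t in a..b, g t) (hx : x ∈ Ioo a b) :
    ∫ t in a..x, f t < ∫ t in a..x, g t := by
  have hx' : x ∈ uIcc a b := Ioo_subset_Icc_self.trans Icc_subset_uIcc hx
  have hf_left := hf.mono_set (uIcc_subset_uIcc_left hx')
  have hg_left := hg.mono_set (uIcc_subset_uIcc_left hx')
  have hf_right := hf.mono_set (uIcc_subset_uIcc_right hx')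
  have hg_right := hg.mono_set (uIcc_subset_uIcc_right hx')
  have hcross : ∀ s ∈ Ioo a b, ∀ t ∈ Ioo a b, s < t → g s ≤ f s → g t < f t := by
    intro s hs t ht hst hgf
    have h1 : 1 ≤ f s / g s := by rwa [le_div_iff₀ (hg_pos s hs), one_mul]
    exact (one_lt_div (hg_pos t ht)).1 (h1.trans_lt (hmono hs ht hst))
  by_cases hcrossed : ∃ s ∈ Ioo a x, g s ≤ f s
  · obtain ⟨s, hs, hgf⟩ := hcrossed
    have htail : ∫ t in x..b, g t < ∫ t in x..b, f t :=
      intervalIntegral_lt_of_forall_mem_Ioo_lt hg_right hf_right hx.2 fun t ht =>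
        hcross s ⟨hs.1, hs.2.trans hx.2⟩ t ⟨hx.1.trans ht.1, ht.2⟩ (hs.2.trans ht.1) hgf
    rw [← integral_add_adjacent_intervals hf_left hf_right,
      ← integral_add_adjacent_intervals hg_left hg_right] at heq
    linarith
  · push Not at hcrossed
    exact intervalIntegral_lt_of_forall_mem_Ioo_lt hf_left hg_left hx.1 hcrossed

theorem intervalIntegrable_rpow_mul_one_sub_rpow_zero_half {a b : ℝ} (ha : 0 < a) :
    IntervalIntegrable (fun x : ℝ => x ^ (a - 1) * (1 - x) ^ (b - 1)) volume 0 (1 / 2) := by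
  refine (intervalIntegrable_rpow' (by linarith)).mul_continuousOn
    (ContinuousOn.rpow_const (by fun_prop) fun x hx => Or.inl ?_)
  rw [uIcc_of_le (by norm_num)] at hx
  linarith [hx.2]

theorem intervalIntegrable_rpow_mul_one_sub_rpow {a b : ℝ} (ha : 0 < a) (hb : 0 < b) :
    IntervalIntegrable (fun x : ℝ => x ^ (a - 1) * (1 - x) ^ (b - 1)) volume 0 1 := by
  have hright := (intervalIntegrable_rpow_mul_one_sub_rpow_zero_half (b := a) hb).comp_sub_left 1
  norm_num at hright
  refine (intervalIntegrable_rpow_mul_one_sub_rpow_zero_half ha).trans ?_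
  simpa only [mul_comm] using hright.symm

theorem betaB_pos {α : ℝ} (hα : 0 < α) : 0 < betaB α :=
  intervalIntegral_pos_of_pos_on (intervalIntegrable_rpow_mul_one_sub_rpow hα hα)
    (fun _ ht => mul_pos (Real.rpow_pos_of_pos ht.1 _)
      (Real.rpow_pos_of_pos (sub_pos.2 ht.2) _)) one_pos

theorem intervalIntegrable_fbeta {α s t : ℝ} (hα : 0 < α) (hs : s ∈ Icc (0:ℝ) 1)
    (ht : t ∈ Icc (0:ℝ) 1) : IntervalIntegrable (fbeta α) volume s t :=
  ((intervalIntegrable_rpow_mul_one_sub_rpow hα hα).mono_set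
    (uIcc_subset_uIcc (Icc_subset_uIcc hs) (Icc_subset_uIcc ht))).div_const _

theorem fbeta_pos {α t : ℝ} (hα : 0 < α) (ht : t ∈ Ioo (0:ℝ) 1) : 0 < fbeta α t :=
  div_pos (mul_pos (Real.rpow_pos_of_pos ht.1 _) (Real.rpow_pos_of_pos (sub_pos.2 ht.2) _))
    (betaB_pos hα)

theorem fbeta_one_sub (α x : ℝ) : fbeta α (1 - x) = fbeta α x := by
  rw [fbeta, fbeta, sub_sub_cancel, mul_comm]

theorem Fbeta_one {α : ℝ} (hα : 0 < α) : Fbeta α 1 = 1 := by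
  simp only [Fbeta, fbeta, intervalIntegral.integral_div]
  exact div_self (betaB_pos hα).ne'

theorem Fbeta_add_Fbeta_one_sub {α t : ℝ} (hα : 0 < α) (ht : t ∈ Icc (0:ℝ) 1) :
    Fbeta α t + Fbeta α (1 - t) = 1 := by
  have htail : Fbeta α (1 - t) = ∫ x in t..1, fbeta α x := by
    simpa only [Fbeta, fbeta_one_sub, sub_self, sub_zero] using
      (integral_comp_sub_left (a := t) (b := 1) (fbeta α) 1).symm
  rw [htail, Fbeta, integral_add_adjacent_intervals
    (intervalIntegrable_fbeta hα (left_mem_Icc.2 zero_le_one) ht)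
    (intervalIntegrable_fbeta hα ht (right_mem_Icc.2 zero_le_one))]
  exact Fbeta_one hα

theorem Fbeta_half {α : ℝ} (hα : 0 < α) : Fbeta α (1 / 2) = 1 / 2 := by
  have h := Fbeta_add_Fbeta_one_sub hα (t := 1 / 2) ⟨by norm_num, by norm_num⟩
  norm_num at h
  linarith

theorem fbeta_div_fbeta {α β t : ℝ} (ht : t ∈ Ioo (0:ℝ) 1) :
    fbeta α t / fbeta β t = (t * (1 - t)) ^ (α - β) * (betaB β / betaB α) := by
  have hu : 0 < t * (1 - t) := mul_pos ht.1 (sub_pos.2 ht.2)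
  simp only [fbeta, ← Real.mul_rpow ht.1.le (sub_pos.2 ht.2).le]
  rw [show α - β = (α - 1) - (β - 1) by ring, Real.rpow_sub hu (α - 1), div_div_div_eq,
    div_mul_div_comm, mul_comm (betaB α)]

theorem strictMonoOn_fbeta_div_fbeta {α β : ℝ} (hβ : 0 < β) (hβα : β < α) :
    StrictMonoOn (fun t => fbeta α t / fbeta β t) (Ioo (0:ℝ) (1 / 2)) := by
  intro s hs t ht hst
  have hs1 : s ∈ Ioo (0:ℝ) 1 := ⟨hs.1, by linarith [hs.2]⟩
  have ht1 : t ∈ Ioo (0:ℝ) 1 := ⟨ht.1, by linarith [ht.2]⟩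
  simp only [fbeta_div_fbeta hs1, fbeta_div_fbeta ht1]
  refine mul_lt_mul_of_pos_right ?_ (div_pos (betaB_pos hβ) (betaB_pos (hβ.trans hβα)))
  refine Real.rpow_lt_rpow (mul_pos hs1.1 (sub_pos.2 hs1.2)).le ?_ (sub_pos.2 hβα)
  nlinarith [ht.2]

theorem Fbeta_lt_Fbeta_of_lt_half {α β x : ℝ} (hβ : 0 < β) (hβα : β < α)
    (hx : x ∈ Ioo (0:ℝ) (1 / 2)) : Fbeta α x < Fbeta β x := by
  have hα := hβ.trans hβα
  have hhalf : (1 / 2 : ℝ) ∈ Icc (0:ℝ) 1 := ⟨by norm_num, by norm_num⟩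
  refine intervalIntegral_lt_of_strictMonoOn_div
    (intervalIntegrable_fbeta hα (left_mem_Icc.2 zero_le_one) hhalf)
    (intervalIntegrable_fbeta hβ (left_mem_Icc.2 zero_le_one) hhalf)
    (fun t ht => fbeta_pos hβ ⟨ht.1, by linarith [ht.2]⟩)
    (strictMonoOn_fbeta_div_fbeta hβ hβα) ?_ hx
  exact (Fbeta_half hα).trans (Fbeta_half hβ).symm

theorem Fbeta_ne_Fbeta {α β x : ℝ} (hβ : 0 < β) (hβα : β < α) (hx : x ∈ Ioo (0:ℝ) 1)
    (hx_half : x ≠ 1 / 2) : Fbeta α x ≠ Fbeta β x := by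
  rcases hx_half.lt_or_gt with hlt | hgt
  · exact (Fbeta_lt_Fbeta_of_lt_half hβ hβα ⟨hx.1, hlt⟩).ne
  · have hreflect : Fbeta α (1 - x) < Fbeta β (1 - x) :=
      Fbeta_lt_Fbeta_of_lt_half hβ hβα ⟨by linarith [hx.2], by linarith⟩
    have hsum_α := Fbeta_add_Fbeta_one_sub (hβ.trans hβα) (Ioo_subset_Icc_self hx)
    have hsum_β := Fbeta_add_Fbeta_one_sub hβ (Ioo_subset_Icc_self hx)
    exact (by linarith : Fbeta β x < Fbeta α x).ne'

theorem Fbeta_unique_crossing (α₁ α₂ : ℝ) (h₁ : 0 < α₁) (h₂ : 0 < α₂) (hne : α₁ ≠ α₂) :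
    ∀ x ∈ Set.Ioo (0:ℝ) 1, (Fbeta α₁ x = Fbeta α₂ x ↔ x = 1/2) := by
  intro x hx
  refine ⟨fun heq => ?_, fun hx_half => by rw [hx_half, Fbeta_half h₁, Fbeta_half h₂]⟩
  by_contra hx_half
  rcases hne.lt_or_gt with h | h
  · exact Fbeta_ne_Fbeta h₁ h hx hx_half heq.symm
  · exact Fbeta_ne_Fbeta h₂ h hx hx_half heq
end

section
/- For each fixed x ∈ (0, 1/2), the function α ↦ F_α(x) is strictly decreasing on (0, ∞), where F_α is the distribution function of the symmetric Beta distribution with parameter α. -/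
/-!
With `w_γ(t) = (t(1-t))^(γ-1)`, symmetry about `1/2` gives `F_γ(x) = ½ · ∫₀ˣ w_γ / ∫₀^{1/2} w_γ`.
For `α < β` the ratio `w_β / w_α = (t(1-t))^(β-α)` is strictly increasing on `(0, 1/2]`, so it
stays below its value `k` at `x` on `(0, x)` and above it on `(x, 1/2)`. Hence `w_β` puts less
relative mass than `w_α` on `[0, x]`, which is `F_β(x) < F_α(x)`.
-/

open MeasureTheory intervalIntegral

open Set

section RatioComparison

variable {f g : ℝ → ℝ} {a b c : ℝ}

theorem integral_lt_integral_of_forall_mem_Ioo_lt (hab : a < b)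
    (hf : IntervalIntegrable f volume a b)
    (hg : IntervalIntegrable g volume a b) (hlt : ∀ t ∈ Ioo a b, f t < g t) :
    (∫ t in a..b, f t) < ∫ t in a..b, g t := by
  rw [← sub_pos, ← integral_sub hg hf]
  exact intervalIntegral_pos_of_pos_on (hg.sub hf) (fun t ht => sub_pos.mpr (hlt t ht)) hab

theorem integral_div_integral_lt_of_ratio_crosses (hab : a < b) (hbc : b < c)
    (hf : IntervalIntegrable f volume a c) (hg : IntervalIntegrable g volume a c)
    (hf_pos : ∀ t ∈ Ioo a c, 0 < f t) (hg_pos : ∀ t ∈ Ioo a c, 0 < g t) (k : ℝ)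
    (h_below : ∀ t ∈ Ioo a b, g t < k * f t) (h_above : ∀ t ∈ Ioo b c, k * f t < g t) :
    (∫ t in a..b, g t) / (∫ t in a..c, g t) < (∫ t in a..b, f t) / (∫ t in a..c, f t) := by
  have hb : b ∈ uIcc a c := Icc_subset_uIcc ⟨hab.le, hbc.le⟩
  have hsub₁ : uIcc a b ⊆ uIcc a c := uIcc_subset_uIcc left_mem_uIcc hb
  have hsub₂ : uIcc b c ⊆ uIcc a c := uIcc_subset_uIcc hb right_mem_uIcc
  have Ioo_left : Ioo a b ⊆ Ioo a c := Ioo_subset_Ioo_right hbc.le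
  have Ioo_right : Ioo b c ⊆ Ioo a c := Ioo_subset_Ioo_left hab.le
  have hA_f : 0 < ∫ t in a..b, f t :=
    intervalIntegral_pos_of_pos_on (hf.mono_set hsub₁) (fun t ht => hf_pos t (Ioo_left ht)) hab
  have hB_f : 0 < ∫ t in b..c, f t :=
    intervalIntegral_pos_of_pos_on (hf.mono_set hsub₂) (fun t ht => hf_pos t (Ioo_right ht)) hbc
  have hA_g : 0 < ∫ t in a..b, g t :=
    intervalIntegral_pos_of_pos_on (hg.mono_set hsub₁) (fun t ht => hg_pos t (Ioo_left ht)) hab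
  have hB_g : 0 < ∫ t in b..c, g t :=
    intervalIntegral_pos_of_pos_on (hg.mono_set hsub₂) (fun t ht => hg_pos t (Ioo_right ht)) hbc
  have hA : (∫ t in a..b, g t) < k * ∫ t in a..b, f t := by
    rw [← intervalIntegral.integral_const_mul]
    exact integral_lt_integral_of_forall_mem_Ioo_lt hab (hg.mono_set hsub₁)
      ((hf.mono_set hsub₁).const_mul k) h_below
  have hB : k * (∫ t in b..c, f t) < ∫ t in b..c, g t := by
    rw [← intervalIntegral.integral_const_mul]
    exact integral_lt_integral_of_forall_mem_Ioo_lt hbc ((hf.mono_set hsub₂).const_mul k)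
      (hg.mono_set hsub₂) h_above
  rw [← integral_add_adjacent_intervals (hf.mono_set hsub₁) (hf.mono_set hsub₂),
    ← integral_add_adjacent_intervals (hg.mono_set hsub₁) (hg.mono_set hsub₂),
    div_lt_div_iff₀ (by positivity) (by positivity)]
  nlinarith [mul_lt_mul_of_pos_right hA hB_f, mul_lt_mul_of_pos_left hB hA_f]

end RatioComparison

noncomputable def symmBetaWeight (γ t : ℝ) : ℝ := t ^ (γ - 1) * (1 - t) ^ (γ - 1)

section SymmBetaWeight

variable {α β γ t : ℝ}

theorem symmBetaWeight_one_sub (γ t : ℝ) : symmBetaWeight γ (1 - t) = symmBetaWeight γ t := by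
  rw [symmBetaWeight, symmBetaWeight, sub_sub_cancel, mul_comm]

theorem symmBetaWeight_pos (h0 : 0 < t) (h1 : t < 1) : 0 < symmBetaWeight γ t :=
  mul_pos (Real.rpow_pos_of_pos h0 _) (Real.rpow_pos_of_pos (sub_pos.mpr h1) _)

theorem symmBetaWeight_eq_mul_rpow (h0 : 0 < t) (h1 : t < 1) :
    symmBetaWeight β t = (t * (1 - t)) ^ (β - α) * symmBetaWeight α t := by
  have h1' : 0 < 1 - t := sub_pos.mpr h1
  rw [symmBetaWeight, symmBetaWeight, Real.mul_rpow h0.le h1'.le, mul_mul_mul_comm,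
    ← Real.rpow_add h0, ← Real.rpow_add h1']
  congr 2 <;> ring

theorem intervalIntegrable_symmBetaWeight_zero_half (hγ : 0 < γ) :
    IntervalIntegrable (symmBetaWeight γ) volume 0 (1 / 2) := by
  refine (intervalIntegrable_rpow' (by linarith : -1 < γ - 1)).mul_continuousOn ?_
  refine ContinuousOn.rpow_const (by fun_prop) fun t ht => Or.inl ?_
  rw [uIcc_of_le (by norm_num)] at ht
  linarith [ht.2]

theorem intervalIntegrable_symmBetaWeight_half_one (hγ : 0 < γ) :
    IntervalIntegrable (symmBetaWeight γ) volume (1 / 2) 1 := by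
  have h := (intervalIntegrable_symmBetaWeight_zero_half hγ).comp_sub_left 1
  norm_num only [symmBetaWeight_one_sub] at h
  exact h.symm

theorem integral_symmBetaWeight_half_one (γ : ℝ) :
    ∫ t in (1 / 2 : ℝ)..1, symmBetaWeight γ t = ∫ t in (0 : ℝ)..(1 / 2), symmBetaWeight γ t := by
  have h := integral_comp_sub_left (a := 0) (b := 1 / 2) (symmBetaWeight γ) 1
  norm_num only [symmBetaWeight_one_sub] at h
  exact h.symm

theorem betaB_eq_two_mul_integral_zero_half (hγ : 0 < γ) :
    betaB γ = 2 * ∫ t in (0 : ℝ)..(1 / 2), symmBetaWeight γ t := by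
  change ∫ t in (0 : ℝ)..1, symmBetaWeight γ t = _
  rw [← integral_add_adjacent_intervals (intervalIntegrable_symmBetaWeight_zero_half hγ)
    (intervalIntegrable_symmBetaWeight_half_one hγ), integral_symmBetaWeight_half_one]
  ring

theorem Fbeta_eq_div_integral_zero_half (hγ : 0 < γ) (x : ℝ) :
    Fbeta γ x = (∫ t in (0 : ℝ)..x, symmBetaWeight γ t) /
      (∫ t in (0 : ℝ)..(1 / 2), symmBetaWeight γ t) / 2 := by
  change ∫ t in (0 : ℝ)..x, symmBetaWeight γ t / betaB γ = _
  rw [intervalIntegral.integral_div, betaB_eq_two_mul_integral_zero_half hγ, div_div, mul_comm]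

end SymmBetaWeight

theorem rpow_mul_one_sub_lt_rpow_mul_one_sub {s t p : ℝ} (hs : 0 < s) (hst : s < t)
    (ht : t ≤ 1 / 2) (hp : 0 < p) : (s * (1 - s)) ^ p < (t * (1 - t)) ^ p :=
  Real.rpow_lt_rpow (by nlinarith) (by nlinarith) hp

theorem Fbeta_strictAnti_in_alpha (x : ℝ) (hx : x ∈ Set.Ioo (0:ℝ) (1/2)) :
    StrictAntiOn (fun α : ℝ => Fbeta α x) (Set.Ioi (0:ℝ)) := by
  obtain ⟨hx0, hx2⟩ := hx
  intro α (hα : 0 < α) β (hβ : 0 < β) hαβ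
  have hp : 0 < β - α := sub_pos.mpr hαβ
  show Fbeta β x < Fbeta α x
  rw [Fbeta_eq_div_integral_zero_half hα, Fbeta_eq_div_integral_zero_half hβ]
  refine div_lt_div_of_pos_right ?_ two_pos
  refine integral_div_integral_lt_of_ratio_crosses hx0 hx2
    (intervalIntegrable_symmBetaWeight_zero_half hα)
    (intervalIntegrable_symmBetaWeight_zero_half hβ)
    (fun t ht => symmBetaWeight_pos ht.1 (by linarith [ht.2]))
    (fun t ht => symmBetaWeight_pos ht.1 (by linarith [ht.2])) ((x * (1 - x)) ^ (β - α)) ?_ ?_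
  · rintro t ⟨ht0, htx⟩
    rw [symmBetaWeight_eq_mul_rpow (α := α) (β := β) ht0 (by linarith)]
    exact mul_lt_mul_of_pos_right (rpow_mul_one_sub_lt_rpow_mul_one_sub ht0 htx hx2.le hp)
      (symmBetaWeight_pos ht0 (by linarith))
  · rintro t ⟨hxt, ht2⟩
    rw [symmBetaWeight_eq_mul_rpow (α := α) (β := β) (hx0.trans hxt) (by linarith)]
    exact mul_lt_mul_of_pos_right (rpow_mul_one_sub_lt_rpow_mul_one_sub hx0 hxt ht2.le hp)
      (symmBetaWeight_pos (hx0.trans hxt) (by linarith))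
end

section
/- The map φ⁻¹ : (α, β) ↦ (M, V) = (α/(α+β), αβ/((α+β)²(α+β+1))) is a bijection from (0,∞) × (0,∞) onto the dome D = {(M,V) ∈ (0,1) × (0,1) : V < M - M²}, with inverse φ(M,V) = (M(M - M² - V)/V, (1-M)(M - M² - V)/V). -/
noncomputable def toMV (p : ℝ × ℝ) : ℝ × ℝ :=
  (p.1 / (p.1 + p.2), p.1 * p.2 / ((p.1 + p.2) ^ 2 * (p.1 + p.2 + 1)))

noncomputable def toAB (q : ℝ × ℝ) : ℝ × ℝ :=
  (q.1 * (q.1 - q.1 ^ 2 - q.2) / q.2, (1 - q.1) * (q.1 - q.1 ^ 2 - q.2) / q.2)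

def Dome : Set (ℝ × ℝ) :=
  {q | q.1 ∈ Set.Ioo (0:ℝ) 1 ∧ q.2 ∈ Set.Ioo (0:ℝ) 1 ∧ q.2 < q.1 - q.1 ^ 2}

/-!
Write a point of the open quadrant as `(M * s, (1 - M) * s)` with `s = α + β > 0` and
`M ∈ (0, 1)`. Then `toMV` sends it to `(M, M (1 - M) / (s + 1))`, so `M` is kept and `V`
runs bijectively over `(0, M (1 - M))` as `s` runs over `(0, ∞)`; solving for `s` gives
`s = M (1 - M) / V - 1`, which is the common factor in both coordinates of `toAB`.
-/

open Set

lemma toMV_mul_one_sub_mul (M s : ℝ) (hs : s ≠ 0) :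
    toMV (M * s, (1 - M) * s) = (M, M * (1 - M) / (s + 1)) := by
  have hsum : M * s + (1 - M) * s = s := by ring
  simp only [toMV, hsum, Prod.mk.injEq]
  constructor <;> field_simp

lemma toAB_eq_mul_one_sub_mul (q : ℝ × ℝ) (hq : q.2 ≠ 0) :
    toAB q = (q.1 * (q.1 * (1 - q.1) / q.2 - 1), (1 - q.1) * (q.1 * (1 - q.1) / q.2 - 1)) := by
  simp only [toAB, Prod.mk.injEq]
  constructor <;> field_simp

lemma prod_eq_mul_one_sub_mul {a b : ℝ} (h : a + b ≠ 0) :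
    (a, b) = (a / (a + b) * (a + b), (1 - a / (a + b)) * (a + b)) :=
  Prod.ext (by field_simp) (by field_simp; ring)

lemma div_add_mem_Ioo {a b : ℝ} (ha : 0 < a) (hb : 0 < b) : a / (a + b) ∈ Ioo 0 1 :=
  ⟨by positivity, (div_lt_one (by positivity)).2 (by linarith)⟩

lemma mul_one_sub_pos {M : ℝ} (hM : M ∈ Ioo 0 1) : 0 < M * (1 - M) :=
  mul_pos hM.1 (sub_pos.2 hM.2)

lemma mk_mem_Dome {M V : ℝ} (hM : M ∈ Ioo 0 1) (hV : 0 < V) (hVM : V < M * (1 - M)) :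
    (M, V) ∈ Dome := by
  have hquarter : M * (1 - M) ≤ 1 / 4 := by nlinarith [sq_nonneg (M - 1 / 2)]
  exact ⟨hM, ⟨hV, by linarith⟩, by linarith⟩

lemma sub_one_pos_of_mem_Dome {q : ℝ × ℝ} (hq : q ∈ Dome) : 0 < q.1 * (1 - q.1) / q.2 - 1 := by
  rw [sub_pos, one_lt_div hq.2.1.1]
  linarith [hq.2.2]

lemma mapsTo_toMV : MapsTo toMV (Ioi 0 ×ˢ Ioi 0) Dome := by
  rintro ⟨a, b⟩ ⟨ha, hb⟩
  have hM := div_add_mem_Ioo ha hb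
  have hs : 0 < a + b := add_pos ha hb
  have hvar := mul_one_sub_pos hM
  rw [prod_eq_mul_one_sub_mul hs.ne', toMV_mul_one_sub_mul _ _ hs.ne']
  exact mk_mem_Dome hM (by positivity) (div_lt_self hvar (by linarith))

lemma mapsTo_toAB : MapsTo toAB Dome (Ioi 0 ×ˢ Ioi 0) := by
  intro q hq
  have hs := sub_one_pos_of_mem_Dome hq
  rw [toAB_eq_mul_one_sub_mul _ hq.2.1.1.ne']
  exact ⟨mul_pos hq.1.1 hs, mul_pos (sub_pos.2 hq.1.2) hs⟩

lemma leftInvOn_toAB_toMV : LeftInvOn toAB toMV (Ioi 0 ×ˢ Ioi 0) := by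
  rintro ⟨a, b⟩ ⟨ha, hb⟩
  have hM := div_add_mem_Ioo ha hb
  have hs : 0 < a + b := add_pos ha hb
  have hvar := mul_one_sub_pos hM
  have hV : 0 < a / (a + b) * (1 - a / (a + b)) / (a + b + 1) := by positivity
  rw [prod_eq_mul_one_sub_mul hs.ne', toMV_mul_one_sub_mul _ _ hs.ne',
    toAB_eq_mul_one_sub_mul _ hV.ne', div_div_cancel₀ hvar.ne', add_sub_cancel_right]

lemma rightInvOn_toAB_toMV : RightInvOn toAB toMV Dome := by
  rintro ⟨M, V⟩ hq
  have hvar := mul_one_sub_pos hq.1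
  rw [toAB_eq_mul_one_sub_mul _ hq.2.1.1.ne',
    toMV_mul_one_sub_mul _ _ (sub_one_pos_of_mem_Dome hq).ne', sub_add_cancel,
    div_div_cancel₀ hvar.ne']

theorem toMV_bijOn :
    Set.BijOn toMV (Set.Ioi (0:ℝ) ×ˢ Set.Ioi (0:ℝ)) Dome ∧
    Set.InvOn toAB toMV (Set.Ioi (0:ℝ) ×ˢ Set.Ioi (0:ℝ)) Dome := by
  have hinv : InvOn toAB toMV (Ioi 0 ×ˢ Ioi 0) Dome :=
    ⟨leftInvOn_toAB_toMV, rightInvOn_toAB_toMV⟩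
  exact ⟨hinv.bijOn mapsTo_toMV mapsTo_toAB, hinv⟩
end

section
/- Let M ∈ (0,1) and V₁, V₂ ∈ (0, M - M²) with V₁ ≠ V₂. Then the equation F_{M,V₁}(x) = F_{M,V₂}(x) has exactly one solution x_c in the open interval (0,1); moreover if V₁ < V₂ then F_{M,V₁}(x) < F_{M,V₂}(x) for x ∈ (0, x_c) and F_{M,V₂}(x) < F_{M,V₁}(x) for x ∈ (x_c, 1). -/
open MeasureTheory intervalIntegral

noncomputable def betaCDF (α β t : ℝ) : ℝ :=
  (∫ x in (0:ℝ)..t, x ^ (α - 1) * (1 - x) ^ (β - 1)) /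
    ∫ x in (0:ℝ)..1, x ^ (α - 1) * (1 - x) ^ (β - 1)

noncomputable def FMV (M V t : ℝ) : ℝ :=
  betaCDF (M * (M - M ^ 2 - V) / V) ((1 - M) * (M - M ^ 2 - V) / V) t

/-!
Shrinking the variance at fixed mean increases both shape parameters, say from `(α, β)` to
`(α + p, β + q)` with `p, q > 0`. The density ratio of the two Beta laws is then proportional to
`r x = x ^ p * (1 - x) ^ q`, which increases up to `p / (p + q)` and then decreases. The
difference `G` of the two CDFs vanishes at `0` and `1`, and `G'` has the sign of `r - κ` for a
constant `κ > 0`. Since `G` cannot be decreasing on all of `[0, 1]`, `κ` lies below the maximum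
of `r`, so `G` decreases, increases, then decreases again: it is negative, then positive, with a
single zero in between.
-/

open Set

section SignChange

variable {G g r w : ℝ → ℝ} {a b c d κ m : ℝ}

lemma strictMonoOn_Icc_of_hasDerivAt_pos (hG : ContinuousOn G (Icc c d))
    (hG' : ∀ x ∈ Ioo c d, HasDerivAt G (g x) x) (hpos : ∀ x ∈ Ioo c d, 0 < g x) :
    StrictMonoOn G (Icc c d) :=
  strictMonoOn_of_deriv_pos (convex_Icc c d) hG fun x hx => by
    rw [interior_Icc] at hx
    exact (hG' x hx).deriv ▸ hpos x hx

lemma strictAntiOn_Icc_of_hasDerivAt_neg (hG : ContinuousOn G (Icc c d))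
    (hG' : ∀ x ∈ Ioo c d, HasDerivAt G (g x) x) (hneg : ∀ x ∈ Ioo c d, g x < 0) :
    StrictAntiOn G (Icc c d) :=
  strictAntiOn_of_deriv_neg (convex_Icc c d) hG fun x hx => by
    rw [interior_Icc] at hx
    exact (hG' x hx).deriv ▸ hneg x hx

lemma exists_sign_change_of_strictAntiOn_strictMonoOn_strictAntiOn {u v : ℝ}
    (hau : a < u) (huv : u < v) (hvb : v < b) (hG : ContinuousOn G (Icc u v))
    (h₁ : StrictAntiOn G (Icc a u)) (h₂ : StrictMonoOn G (Icc u v))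
    (h₃ : StrictAntiOn G (Icc v b)) (ha : G a = 0) (hb : G b = 0) :
    ∃ c ∈ Ioo a b, G c = 0 ∧ (∀ x ∈ Ioo a c, G x < 0) ∧ ∀ x ∈ Ioo c b, 0 < G x := by
  have hu : G u < 0 := ha ▸ h₁ (left_mem_Icc.2 hau.le) (right_mem_Icc.2 hau.le) hau
  have hv : 0 < G v := hb ▸ h₃ (left_mem_Icc.2 hvb.le) (right_mem_Icc.2 hvb.le) hvb
  obtain ⟨c, hc, hGc⟩ := intermediate_value_Ioo huv.le hG ⟨hu, hv⟩
  refine ⟨c, ⟨hau.trans hc.1, hc.2.trans hvb⟩, hGc, fun x hx => ?_, fun x hx => ?_⟩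
  · rcases le_total x u with h | h
    · exact ha ▸ h₁ (left_mem_Icc.2 hau.le) ⟨hx.1.le, h⟩ hx.1
    · exact hGc ▸ h₂ ⟨h, (hx.2.trans hc.2).le⟩ (Ioo_subset_Icc_self hc) hx.2
  · rcases le_total x v with h | h
    · exact hGc ▸ h₂ (Ioo_subset_Icc_self hc) ⟨(hc.1.trans hx.1).le, h⟩ hx.1
    · exact hb ▸ h₃ ⟨h, hx.2.le⟩ (right_mem_Icc.2 hvb.le) hx.2

lemma exists_level_crossings_of_strictMonoOn_strictAntiOn (hr : ContinuousOn r (Icc a b))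
    (hm : m ∈ Ioo a b) (hmono : StrictMonoOn r (Icc a m)) (hanti : StrictAntiOn r (Icc m b))
    (ha : r a < κ) (hb : r b < κ) (hκ : κ < r m) :
    ∃ u v, a < u ∧ u < v ∧ v < b ∧ (∀ x ∈ Ioo a u, r x < κ) ∧ (∀ x ∈ Ioo u v, κ < r x) ∧
      ∀ x ∈ Ioo v b, r x < κ := by
  obtain ⟨u, hu, hru⟩ :=
    intermediate_value_Ioo hm.1.le (hr.mono (Icc_subset_Icc le_rfl hm.2.le)) ⟨ha, hκ⟩
  obtain ⟨v, hv, hrv⟩ :=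
    intermediate_value_Ioo' hm.2.le (hr.mono (Icc_subset_Icc hm.1.le le_rfl)) ⟨hb, hκ⟩
  refine ⟨u, v, hu.1, hu.2.trans hv.1, hv.2, fun x hx => ?_, fun x hx => ?_, fun x hx => ?_⟩
  · exact hru ▸ hmono ⟨hx.1.le, (hx.2.trans hu.2).le⟩ (Ioo_subset_Icc_self hu) hx.2
  · rcases le_total x m with h | h
    · exact hru ▸ hmono (Ioo_subset_Icc_self hu) ⟨(hu.1.trans hx.1).le, h⟩ hx.1
    · exact hrv ▸ hanti ⟨h, (hx.2.trans hv.2).le⟩ (Ioo_subset_Icc_self hv) hx.2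
  · exact hrv ▸ hanti (Ioo_subset_Icc_self hv) ⟨(hv.1.trans hx.1).le, hx.2.le⟩ hx.1

theorem exists_sign_change_of_hasDerivAt_mul_sub (hG : ContinuousOn G (Icc a b))
    (hGa : G a = 0) (hGb : G b = 0) (hG' : ∀ x ∈ Ioo a b, HasDerivAt G (w x * (r x - κ)) x)
    (hw : ∀ x ∈ Ioo a b, 0 < w x) (hr : ContinuousOn r (Icc a b)) (hm : m ∈ Ioo a b)
    (hmono : StrictMonoOn r (Icc a m)) (hanti : StrictAntiOn r (Icc m b))
    (hra : r a < κ) (hrb : r b < κ) :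
    ∃ c ∈ Ioo a b, G c = 0 ∧ (∀ x ∈ Ioo a c, G x < 0) ∧ ∀ x ∈ Ioo c b, 0 < G x := by
  have anti : ∀ c d, a ≤ c → d ≤ b → (∀ x ∈ Ioo c d, r x < κ) → StrictAntiOn G (Icc c d) :=
    fun c d hc hd hlt => strictAntiOn_Icc_of_hasDerivAt_neg (hG.mono (Icc_subset_Icc hc hd))
      (fun x hx => hG' x ⟨hc.trans_lt hx.1, hx.2.trans_le hd⟩) fun x hx =>
        mul_neg_of_pos_of_neg (hw x ⟨hc.trans_lt hx.1, hx.2.trans_le hd⟩) (sub_neg.2 (hlt x hx))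
  have mono : ∀ c d, a ≤ c → d ≤ b → (∀ x ∈ Ioo c d, κ < r x) → StrictMonoOn G (Icc c d) :=
    fun c d hc hd hlt => strictMonoOn_Icc_of_hasDerivAt_pos (hG.mono (Icc_subset_Icc hc hd))
      (fun x hx => hG' x ⟨hc.trans_lt hx.1, hx.2.trans_le hd⟩) fun x hx =>
        mul_pos (hw x ⟨hc.trans_lt hx.1, hx.2.trans_le hd⟩) (sub_pos.2 (hlt x hx))
  -- otherwise `G` would strictly decrease on `[a, m]` and on `[m, b]`, contradicting `G a = G b`
  have hκ : κ < r m := by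
    by_contra! h
    have h₁ := anti a m le_rfl hm.2.le fun x hx =>
      (hmono (Ioo_subset_Icc_self hx) (right_mem_Icc.2 hm.1.le) hx.2).trans_le h
    have h₂ := anti m b hm.1.le le_rfl fun x hx =>
      (hanti (left_mem_Icc.2 hm.2.le) (Ioo_subset_Icc_self hx) hx.1).trans_le h
    have := h₁ (left_mem_Icc.2 hm.1.le) (right_mem_Icc.2 hm.1.le) hm.1
    have := h₂ (left_mem_Icc.2 hm.2.le) (right_mem_Icc.2 hm.2.le) hm.2
    linarith
  obtain ⟨u, v, hau, huv, hvb, hu, huv', hv⟩ :=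
    exists_level_crossings_of_strictMonoOn_strictAntiOn hr hm hmono hanti hra hrb hκ
  exact exists_sign_change_of_strictAntiOn_strictMonoOn_strictAntiOn hau huv hvb
    (hG.mono (Icc_subset_Icc hau.le hvb.le)) (anti a u le_rfl (huv.trans hvb).le hu)
    (mono u v hau.le hvb.le huv') (anti v b (hau.trans huv).le le_rfl hv) hGa hGb

end SignChange

section Unimodal

variable {p q x : ℝ}

lemma hasDerivAt_rpow_mul_one_sub_rpow (hx : x ∈ Ioo (0 : ℝ) 1) :
    HasDerivAt (fun y => y ^ p * (1 - y) ^ q)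
      (x ^ (p - 1) * (1 - x) ^ (q - 1) * (p - (p + q) * x)) x := by
  have hx0 : x ≠ 0 := hx.1.ne'
  have hx1 : 1 - x ≠ 0 := (sub_pos.2 hx.2).ne'
  have h₁ : HasDerivAt (fun y => y ^ p) (p * x ^ (p - 1)) x :=
    Real.hasDerivAt_rpow_const (Or.inl hx0)
  have h₂ : HasDerivAt (fun y => (1 - y) ^ q) (q * (1 - x) ^ (q - 1) * -1) x :=
    ((Real.hasDerivAt_rpow_const (Or.inl hx1)).comp x ((hasDerivAt_id x).const_sub 1) :)
  refine (h₁.mul h₂).congr_deriv ?_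
  rw [Real.rpow_sub_one hx0, Real.rpow_sub_one hx1]
  field_simp
  ring

lemma strictMonoOn_rpow_mul_one_sub_rpow (hp : 0 < p) (hq : 0 < q) :
    StrictMonoOn (fun x => x ^ p * (1 - x) ^ q) (Icc 0 (p / (p + q))) := by
  have hpq : 0 < p + q := add_pos hp hq
  have hm : p / (p + q) < 1 := (div_lt_one hpq).2 (by linarith)
  refine strictMonoOn_Icc_of_hasDerivAt_pos (by fun_prop (disch := positivity))
    (fun x hx => hasDerivAt_rpow_mul_one_sub_rpow ⟨hx.1, hx.2.trans hm⟩) fun x hx => ?_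
  have : 0 < 1 - x := by linarith [hx.2.trans hm]
  have : 0 < p - (p + q) * x := by nlinarith [(lt_div_iff₀ hpq).1 hx.2]
  have := hx.1
  positivity

lemma strictAntiOn_rpow_mul_one_sub_rpow (hp : 0 < p) (hq : 0 < q) :
    StrictAntiOn (fun x => x ^ p * (1 - x) ^ q) (Icc (p / (p + q)) 1) := by
  have hpq : 0 < p + q := add_pos hp hq
  have hm : 0 < p / (p + q) := div_pos hp hpq
  refine strictAntiOn_Icc_of_hasDerivAt_neg (by fun_prop (disch := positivity))
    (fun x hx => hasDerivAt_rpow_mul_one_sub_rpow ⟨hm.trans hx.1, hx.2⟩) fun x hx => ?_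
  have : 0 < x ^ (p - 1) * (1 - x) ^ (q - 1) :=
    mul_pos (Real.rpow_pos_of_pos (hm.trans hx.1) _) (Real.rpow_pos_of_pos (sub_pos.2 hx.2) _)
  exact mul_neg_of_pos_of_neg this (by nlinarith [(div_lt_iff₀ hpq).1 hx.1])

end Unimodal

section BetaCDF

noncomputable def betaKernel (α β x : ℝ) : ℝ := x ^ (α - 1) * (1 - x) ^ (β - 1)

variable {α β : ℝ}

lemma betaCDF_eq (α β t : ℝ) :
    betaCDF α β t = (∫ x in (0:ℝ)..t, betaKernel α β x) / ∫ x in (0:ℝ)..1, betaKernel α β x :=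
  rfl

lemma betaKernel_pos {x : ℝ} (hx : x ∈ Ioo (0 : ℝ) 1) : 0 < betaKernel α β x :=
  mul_pos (Real.rpow_pos_of_pos hx.1 _) (Real.rpow_pos_of_pos (sub_pos.2 hx.2) _)

lemma betaKernel_add {x : ℝ} (hx : x ∈ Ioo (0 : ℝ) 1) (p q : ℝ) :
    betaKernel (α + p) (β + q) x = betaKernel α β x * (x ^ p * (1 - x) ^ q) := by
  rw [betaKernel, betaKernel, add_sub_right_comm, add_sub_right_comm β,
    Real.rpow_add hx.1, Real.rpow_add (sub_pos.2 hx.2)]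
  ring

lemma continuousOn_betaKernel (α β : ℝ) : ContinuousOn (betaKernel α β) (Ioo 0 1) :=
  fun _ hx => ContinuousAt.continuousWithinAt <|
    (continuousAt_id.rpow_const (Or.inl hx.1.ne')).mul
      ((continuousAt_const.sub continuousAt_id).rpow_const (Or.inl (sub_pos.2 hx.2).ne'))

lemma intervalIntegrable_betaKernel_zero_half (hα : 0 < α) (β : ℝ) :
    IntervalIntegrable (betaKernel α β) volume 0 (1 / 2) := by
  refine (intervalIntegral.intervalIntegrable_rpow' (by linarith)).mul_continuousOn ?_
  rw [uIcc_of_le (by norm_num)]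
  intro x hx
  have : 1 - x ≠ 0 := by linarith [hx.2]
  exact ((continuousAt_const.sub continuousAt_id).rpow_const (Or.inl this)).continuousWithinAt

-- the substitution `x ↦ 1 - x` exchanges the two endpoint singularities
lemma intervalIntegrable_betaKernel (hα : 0 < α) (hβ : 0 < β) :
    IntervalIntegrable (betaKernel α β) volume 0 1 := by
  refine (intervalIntegrable_betaKernel_zero_half hα β).trans ?_
  rw [IntervalIntegrable.iff_comp_neg]
  convert ((intervalIntegrable_betaKernel_zero_half hβ α).comp_add_right 1).symm using 1
  · ext x
    simp only [betaKernel]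
    rw [mul_comm]
    congr 2 <;> ring
  all_goals norm_num

lemma integral_betaKernel_pos (hα : 0 < α) (hβ : 0 < β) :
    0 < ∫ x in (0:ℝ)..1, betaKernel α β x :=
  intervalIntegral_pos_of_pos_on (intervalIntegrable_betaKernel hα hβ)
    (fun _ hx => betaKernel_pos hx) one_pos

lemma betaCDF_zero (α β : ℝ) : betaCDF α β 0 = 0 := by
  simp [betaCDF]

lemma betaCDF_one (hα : 0 < α) (hβ : 0 < β) : betaCDF α β 1 = 1 :=
  div_self (integral_betaKernel_pos hα hβ).ne'

lemma continuousOn_betaCDF (hα : 0 < α) (hβ : 0 < β) : ContinuousOn (betaCDF α β) (Icc 0 1) := by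
  have h := continuousOn_primitive_interval' (intervalIntegrable_betaKernel hα hβ) left_mem_uIcc
  rw [uIcc_of_le zero_le_one] at h
  exact h.div_const _

lemma hasDerivAt_betaCDF (hα : 0 < α) (hβ : 0 < β) {t : ℝ} (ht : t ∈ Ioo (0 : ℝ) 1) :
    HasDerivAt (betaCDF α β) (betaKernel α β t / ∫ x in (0:ℝ)..1, betaKernel α β x) t := by
  refine (integral_hasDerivAt_right ?_ ?_ ?_).div_const _
  · exact (intervalIntegrable_betaKernel hα hβ).mono_set
      (uIcc_subset_uIcc left_mem_uIcc (mem_uIcc_of_le ht.1.le ht.2.le))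
  · exact (continuousOn_betaKernel α β).stronglyMeasurableAtFilter isOpen_Ioo t ht
  · exact (continuousOn_betaKernel α β).continuousAt (isOpen_Ioo.mem_nhds ht)

end BetaCDF

theorem betaCDF_single_crossing {α₁ β₁ α₂ β₂ : ℝ} (hα₂ : 0 < α₂) (hβ₂ : 0 < β₂) (hα : α₂ < α₁)
    (hβ : β₂ < β₁) :
    ∃ xc ∈ Ioo (0:ℝ) 1,
      (∀ x ∈ Ioo (0:ℝ) 1, (betaCDF α₁ β₁ x = betaCDF α₂ β₂ x ↔ x = xc)) ∧
      (∀ x ∈ Ioo 0 xc, betaCDF α₁ β₁ x < betaCDF α₂ β₂ x) ∧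
      (∀ x ∈ Ioo xc 1, betaCDF α₂ β₂ x < betaCDF α₁ β₁ x) := by
  obtain ⟨p, hp, rfl⟩ : ∃ p, 0 < p ∧ α₁ = α₂ + p := ⟨α₁ - α₂, sub_pos.2 hα, by ring⟩
  obtain ⟨q, hq, rfl⟩ : ∃ q, 0 < q ∧ β₁ = β₂ + q := ⟨β₁ - β₂, sub_pos.2 hβ, by ring⟩
  have hα₁ : 0 < α₂ + p := add_pos hα₂ hp
  have hβ₁ : 0 < β₂ + q := add_pos hβ₂ hq
  set B₁ := ∫ x in (0:ℝ)..1, betaKernel (α₂ + p) (β₂ + q) x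
  set B₂ := ∫ x in (0:ℝ)..1, betaKernel α₂ β₂ x
  have hB₁ : 0 < B₁ := integral_betaKernel_pos hα₁ hβ₁
  have hB₂ : 0 < B₂ := integral_betaKernel_pos hα₂ hβ₂
  have hG' : ∀ x ∈ Ioo (0:ℝ) 1,
      HasDerivAt (fun x => betaCDF (α₂ + p) (β₂ + q) x - betaCDF α₂ β₂ x)
        (betaKernel α₂ β₂ x / B₁ * (x ^ p * (1 - x) ^ q - B₁ / B₂)) x := fun x hx =>
    ((hasDerivAt_betaCDF hα₁ hβ₁ hx).sub (hasDerivAt_betaCDF hα₂ hβ₂ hx)).congr_deriv (by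
      change betaKernel _ _ x / B₁ - betaKernel _ _ x / B₂ = _
      rw [betaKernel_add hx]
      field_simp)
  have hpq : 0 < p + q := add_pos hp hq
  obtain ⟨xc, hxc, hGxc, hneg, hpos⟩ := exists_sign_change_of_hasDerivAt_mul_sub
    ((continuousOn_betaCDF hα₁ hβ₁).sub (continuousOn_betaCDF hα₂ hβ₂))
    (by simp only [Pi.sub_apply, betaCDF_zero, sub_self])
    (by simp only [Pi.sub_apply, betaCDF_one hα₁ hβ₁, betaCDF_one hα₂ hβ₂, sub_self])
    hG' (fun x hx => div_pos (betaKernel_pos hx) hB₁) (by fun_prop (disch := positivity))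
    ⟨div_pos hp hpq, (div_lt_one hpq).2 (by linarith)⟩
    (strictMonoOn_rpow_mul_one_sub_rpow hp hq) (strictAntiOn_rpow_mul_one_sub_rpow hp hq)
    (by simp [Real.zero_rpow hp.ne', hB₁, hB₂]) (by simp [Real.zero_rpow hq.ne', hB₁, hB₂])
  refine ⟨xc, hxc, fun x hx => ⟨fun h => ?_, fun h => sub_eq_zero.1 (h ▸ hGxc)⟩,
    fun x hx => sub_neg.1 (hneg x hx), fun x hx => sub_pos.1 (hpos x hx)⟩
  rcases lt_trichotomy x xc with hlt | heq | hgt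
  · exact absurd (sub_eq_zero.2 h) (hneg x ⟨hx.1, hlt⟩).ne
  · exact heq
  · exact absurd (sub_eq_zero.2 h) (hpos x ⟨hgt, hx.2⟩).ne'

lemma strictAntiOn_mul_sub_div {c K : ℝ} (hc : 0 < c) (hK : 0 < K) :
    StrictAntiOn (fun V => c * (K - V) / V) (Ioi 0) := fun V hV V' hV' h => by
  show c * (K - V') / V' < c * (K - V) / V
  rw [div_lt_div_iff₀ hV' hV]
  nlinarith [mul_pos (mul_pos hc hK) (sub_pos.2 h)]

theorem FMV_single_crossing_of_lt {M V V' : ℝ} (hM : M ∈ Ioo (0:ℝ) 1)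
    (hV : V ∈ Ioo (0:ℝ) (M - M ^ 2)) (hV' : V' ∈ Ioo (0:ℝ) (M - M ^ 2)) (h : V < V') :
    ∃ xc ∈ Ioo (0:ℝ) 1,
      (∀ x ∈ Ioo (0:ℝ) 1, (FMV M V x = FMV M V' x ↔ x = xc)) ∧
      (∀ x ∈ Ioo 0 xc, FMV M V x < FMV M V' x) ∧
      (∀ x ∈ Ioo xc 1, FMV M V' x < FMV M V x) := by
  have hK : 0 < M - M ^ 2 := hV.1.trans hV.2
  have hM' : 0 < 1 - M := sub_pos.2 hM.2
  exact betaCDF_single_crossing (div_pos (mul_pos hM.1 (sub_pos.2 hV'.2)) hV'.1)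
    (div_pos (mul_pos hM' (sub_pos.2 hV'.2)) hV'.1)
    (strictAntiOn_mul_sub_div hM.1 hK hV.1 hV'.1 h) (strictAntiOn_mul_sub_div hM' hK hV.1 hV'.1 h)

theorem FMV_single_crossing (M V₁ V₂ : ℝ) (hM : M ∈ Set.Ioo (0:ℝ) 1)
    (hV₁ : V₁ ∈ Set.Ioo (0:ℝ) (M - M ^ 2)) (hV₂ : V₂ ∈ Set.Ioo (0:ℝ) (M - M ^ 2))
    (hne : V₁ ≠ V₂) :
    ∃ xc ∈ Set.Ioo (0:ℝ) 1,
      (∀ x ∈ Set.Ioo (0:ℝ) 1, (FMV M V₁ x = FMV M V₂ x ↔ x = xc)) ∧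
      (V₁ < V₂ →
        (∀ x ∈ Set.Ioo 0 xc, FMV M V₁ x < FMV M V₂ x) ∧
        (∀ x ∈ Set.Ioo xc 1, FMV M V₂ x < FMV M V₁ x)) := by
  rcases hne.lt_or_gt with h | h
  · obtain ⟨xc, hxc, hiff, hlt, hgt⟩ := FMV_single_crossing_of_lt hM hV₁ hV₂ h
    exact ⟨xc, hxc, hiff, fun _ => ⟨hlt, hgt⟩⟩
  · obtain ⟨xc, hxc, hiff, -, -⟩ := FMV_single_crossing_of_lt hM hV₂ hV₁ h
    exact ⟨xc, hxc, fun x hx => eq_comm.trans (hiff x hx), fun h' => absurd h' h.not_gt⟩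
end
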